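/- Let X be a metric space and L a level set. The inverse multi-map C_L⁻¹ : ∂T_X^L ⇒ X of the canonical map is macro-uniform if and only if X has macro-uniform dimension zero (i.e., mesh 𝒞_δ(X) < ∞ for every δ < ∞). -/

import Mathlib

/-! Since `L` is unbounded above, both sides reduce to the same scales `l ∈ L`: points sharing
an `l`-chain component have `canonDist ≤ l`, and `canonDist < l` forces a common `l`-component,
because `l`-components only grow with `l`. -/

open scoped Classical

/-- The `s`-connected component of `x`. -/
def chainComp {X : Type*} [MetricSpace X] (s : ℝ) (x : X) : Set X :=
  {y | Relation.ReflTransGen (fun a b => dist a b ≤ s) x y}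

/-- The canonical ultrametric distance between the branches `C_L(x)` and `C_L(y)` of
the canonical `L`-tower. -/
noncomputable def canonDist {X : Type*} [MetricSpace X] (L : Set ℝ) (x y : X) : ℝ :=
  if ∀ l ∈ L, chainComp l x = chainComp l y then 0
  else sInf {l | l ∈ L ∧ chainComp l x = chainComp l y}

section ChainComp

variable {X : Type*} [MetricSpace X] {s t : ℝ} {x y : X}

lemma mem_chainComp_of_dist_le (h : dist x y ≤ s) : y ∈ chainComp s x :=
  Relation.ReflTransGen.single h

lemma chainComp_mono (hst : s ≤ t) : chainComp s x ⊆ chainComp t x :=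
  fun _ => Relation.ReflTransGen.mono (fun _ _ hab => hab.trans hst) _ _

lemma mem_chainComp_comm (h : y ∈ chainComp s x) : x ∈ chainComp s y :=
  have : Std.Symm fun a b : X => dist a b ≤ s := ⟨fun a b hab => (dist_comm b a).trans_le hab⟩
  Std.Symm.symm _ _ h

lemma chainComp_eq_iff_mem : chainComp s x = chainComp s y ↔ y ∈ chainComp s x := by
  refine ⟨fun h => h ▸ Relation.ReflTransGen.refl, fun h => Set.ext fun z => ⟨?_, ?_⟩⟩
  · exact (mem_chainComp_comm h).trans
  · exact h.trans

end ChainComp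

section CanonDist

variable {X : Type*} [MetricSpace X] {L : Set ℝ} {l : ℝ} {x y : X}

lemma canonDist_le_of_mem_chainComp (hlL : l ∈ L) (hl : 0 ≤ l) (h : y ∈ chainComp l x) :
    canonDist L x y ≤ l := by
  unfold canonDist
  split_ifs
  · exact hl
  · have hmem : l ∈ {l | l ∈ L ∧ chainComp l x = chainComp l y} :=
      ⟨hlL, chainComp_eq_iff_mem.2 h⟩
    -- an unbounded-below set of reals has `sInf = 0`
    exact dite _ (fun hbdd => csInf_le hbdd hmem) fun hbdd => (Real.sInf_of_not_bddBelow hbdd).le.trans hl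

lemma mem_chainComp_of_canonDist_lt (hL : ∃ l' ∈ L, dist x y ≤ l') (hlL : l ∈ L)
    (h : canonDist L x y < l) : y ∈ chainComp l x := by
  unfold canonDist at h
  split_ifs at h with hall
  · exact chainComp_eq_iff_mem.1 (hall l hlL)
  · obtain ⟨l', hl'L, hl'⟩ := hL
    have hne : {l | l ∈ L ∧ chainComp l x = chainComp l y}.Nonempty :=
      ⟨l', hl'L, chainComp_eq_iff_mem.2 (mem_chainComp_of_dist_le hl')⟩
    obtain ⟨k, ⟨-, hk⟩, hkl⟩ := exists_lt_of_csInf_lt hne h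
    exact chainComp_mono hkl.le (chainComp_eq_iff_mem.1 hk)

end CanonDist

theorem canonMapInv_macroUniform_iff_macroDimZero_general {X : Type*} [MetricSpace X]
    (L : Set ℝ)
    (hLsup : ∀ r : ℝ, ∃ l ∈ L, r ≤ l) :
    (∀ δ : ℝ, ∃ ε : ℝ, ∀ x y : X, canonDist L x y ≤ δ → dist x y ≤ ε) ↔
      (∀ δ : ℝ, ∃ m : ℝ, ∀ x y : X, y ∈ chainComp δ x → dist x y ≤ m) := by
  constructor
  · intro hunif δ
    obtain ⟨l, hlL, hl⟩ := hLsup (max δ 0)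
    obtain ⟨ε, hε⟩ := hunif l
    exact ⟨ε, fun x y hxy => hε x y <| canonDist_le_of_mem_chainComp hlL
      (le_of_max_le_right hl) (chainComp_mono (le_of_max_le_left hl) hxy)⟩
  · intro hmesh δ
    obtain ⟨l, hlL, hl⟩ := hLsup (δ + 1)
    obtain ⟨m, hm⟩ := hmesh l
    exact ⟨m, fun x y hxy => hm x y <|
      mem_chainComp_of_canonDist_lt (hLsup _) hlL (by linarith)⟩

/-- The inverse multi-map `C_L⁻¹ : ∂T_X^L ⇒ X` of the canonical map is macro-uniform
(for every `δ < ∞` there is `ε < ∞` such that points whose branches are at distance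
at most `δ` are at distance at most `ε`) if and only if `X` has macro-uniform
dimension zero (i.e. `mesh 𝒞_δ(X) < ∞` for all `δ < ∞`). -/
theorem canonMapInv_macroUniform_iff_macroDimZero {X : Type*} [MetricSpace X]
    (L : Set ℝ)
    (hLpos : ∀ l ∈ L, 0 < l)
    (hLsup : ∀ r : ℝ, ∃ l ∈ L, r ≤ l)
    (hLicc : ∀ a ∈ L, ∀ b ∈ L, (L ∩ Set.Icc a b).Finite)
    (hLinf : (∃ a ∈ L, (L ∩ Set.Iic a).Infinite) → ∀ ε : ℝ, 0 < ε → ∃ l ∈ L, l ≤ ε) :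
    (∀ δ : ℝ, ∃ ε : ℝ, ∀ x y : X, canonDist L x y ≤ δ → dist x y ≤ ε) ↔
      (∀ δ : ℝ, ∃ m : ℝ, ∀ x y : X, y ∈ chainComp δ x → dist x y ≤ m) :=
  canonMapInv_macroUniform_iff_macroDimZero_general L hLsup
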